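/- Assume Σ_{i=1}^m p_i(n) < 1 for all n and that for some r ∈ ℕ, limsup_{n→∞} Σ_{j=n}^{ρ(n)} Σ_{i=1}^m p_i(j) b_r(ρ(n), σ_i(j))^{−1} > 1. Then every solution of (E_A) oscillates. -/

import Mathlib

/-!
If a solution `x` is eventually positive, the equation makes it nondecreasing, i.e.
`x(n) ≤ b_0(n, k) x(k)` with `b_0 = 1`, and the recursion defining `b_r` is exactly what turns
`x(n) ≤ b_r(n, k) x(k)` into `x(i - 1) ≤ (1 - ∑ₗ pₗ(i) b_r(i, σₗ(i))⁻¹) x(i)`, i.e. into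
`x(n) ≤ b_{r+1}(n, k) x(k)`.
Summing the equation over `[n, ρ(n)]`, where all advanced arguments are `≥ ρ(n)`, gives
`S_r(n) x(ρ(n)) ≤ x(ρ(n)) - x(n - 1) < x(ρ(n))` for the sum `S_r(n)` of the criterion, so
`S_r(n) < 1` eventually and `limsup S_r ≤ 1`. Eventually negative solutions are handled by `-x`.
-/

/-- `bA p σ r n k` is the quantity `b_{r+1}(n,k)` of the paper:
`b_1(n,k) = ∏_{i=n+1}^{k} [1 - ∑_ℓ p_ℓ(i)]` and
`b_{r+1}(n,k) = ∏_{i=n+1}^{k} [1 - ∑_ℓ p_ℓ(i) b_r(i,σ_ℓ(i))⁻¹]` (empty products are 1). -/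
noncomputable def bA {m : ℕ} (p : Fin m → ℕ → ℝ) (σ : Fin m → ℕ → ℕ) : ℕ → ℕ → ℕ → ℝ
  | 0, n, k => ∏ i ∈ Finset.Icc (n + 1) k, (1 - ∑ l : Fin m, p l i)
  | r + 1, n, k => ∏ i ∈ Finset.Icc (n + 1) k, (1 - ∑ l : Fin m, p l i * (bA p σ r i (σ l i))⁻¹)

/-- `ρ_i(n) = min_{s ≥ n} σ_i(s)`. -/
noncomputable def rhoi {m : ℕ} (σ : Fin m → ℕ → ℕ) (i : Fin m) (n : ℕ) : ℕ :=
  sInf (σ i '' Set.Ici n)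

/-- `ρ(n) = min_{1 ≤ i ≤ m} ρ_i(n)`. -/
noncomputable def rho {m : ℕ} [NeZero m] (σ : Fin m → ℕ → ℕ) (n : ℕ) : ℕ :=
  Finset.univ.inf' Finset.univ_nonempty (fun i => rhoi σ i n)

open Finset Filter

def IsSolution {m : ℕ} (p : Fin m → ℕ → ℝ) (σ : Fin m → ℕ → ℕ) (x : ℕ → ℝ) : Prop :=
  ∀ n : ℕ, 1 ≤ n → x n - x (n - 1) - ∑ i : Fin m, p i n * x (σ i n) = 0

noncomputable def criterionSum {m : ℕ} [NeZero m] (p : Fin m → ℕ → ℝ) (σ : Fin m → ℕ → ℕ)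
    (r n : ℕ) : ℝ :=
  ∑ j ∈ Icc n (rho σ n), ∑ i : Fin m, p i j * (bA p σ r (rho σ n) (σ i j))⁻¹

lemma le_prod_mul_of_le_mul {x f : ℕ → ℝ} {N : ℕ} (hpos : ∀ n, N ≤ n → 0 < x n)
    (hf : ∀ i, N < i → x (i - 1) ≤ f i * x i) {n k : ℕ} (hn : N ≤ n) (hnk : n ≤ k) :
    x n ≤ (∏ i ∈ Icc (n + 1) k, f i) * x k := by
  induction k, hnk using Nat.le_induction with
  | base => simp
  | succ k hnk ih =>
    have hprod : 0 ≤ ∏ i ∈ Icc (n + 1) k, f i :=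
      (pos_of_mul_pos_left ((hpos n hn).trans_le ih) (hpos k (hn.trans hnk)).le).le
    calc x n ≤ (∏ i ∈ Icc (n + 1) k, f i) * x k := ih
      _ ≤ (∏ i ∈ Icc (n + 1) k, f i) * (f (k + 1) * x (k + 1)) :=
          mul_le_mul_of_nonneg_left (hf (k + 1) (by omega)) hprod
      _ = (∏ i ∈ Icc (n + 1) (k + 1), f i) * x (k + 1) := by
          rw [prod_Icc_succ_top (by omega)]; ring

section

variable {m : ℕ} {p : Fin m → ℕ → ℝ} {σ : Fin m → ℕ → ℕ} {x : ℕ → ℝ} {N : ℕ}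

lemma IsSolution.neg (hx : IsSolution p σ x) : IsSolution p σ (-x) := fun n hn => by
  simp only [Pi.neg_apply, mul_neg, sum_neg_distrib]
  linarith [hx n hn]

lemma IsSolution.sum_Icc (hx : IsSolution p σ x) {a K : ℕ} (ha : 1 ≤ a) (haK : a ≤ K) :
    ∑ j ∈ Icc a K, ∑ i : Fin m, p i j * x (σ i j) = x K - x (a - 1) := by
  induction K, haK using Nat.le_induction with
  | base => rw [Icc_self, sum_singleton]; linarith [hx a ha]
  | succ K haK ih =>
    have hK := hx (K + 1) (by omega)
    rw [Nat.add_sub_cancel] at hK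
    rw [sum_Icc_succ_top (by omega), ih]
    linarith

variable (hp : ∀ i n, 0 ≤ p i n) (hσ : ∀ i n, 1 ≤ n → n + 1 ≤ σ i n)
include hp hσ

lemma IsSolution.monotoneOn (hx : IsSolution p σ x) (hpos : ∀ n, N ≤ n → 0 < x n) :
    MonotoneOn x (Set.Ici N) := by
  refine monotoneOn_of_le_succ Set.ordConnected_Ici fun a _ ha _ => ?_
  have hsum : 0 ≤ ∑ i : Fin m, p i (a + 1) * x (σ i (a + 1)) :=
    sum_nonneg fun i _ => mul_nonneg (hp i _) (hpos _ (by
      have := hσ i (a + 1) (by omega); simp only [Set.mem_Ici] at ha; omega)).le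
  have ha1 := hx (a + 1) (by omega)
  rw [Nat.add_sub_cancel] at ha1
  rw [Order.succ_eq_add_one]
  linarith

lemma IsSolution.le_prod_mul (hx : IsSolution p σ x) (hpos : ∀ n, N ≤ n → 0 < x n)
    {c : ℕ → ℕ → ℝ} (hc : ∀ n k, N ≤ n → n ≤ k → x n ≤ c n k * x k) {n k : ℕ}
    (hn : N ≤ n) (hnk : n ≤ k) :
    x n ≤ (∏ i ∈ Icc (n + 1) k, (1 - ∑ l : Fin m, p l i * (c i (σ l i))⁻¹)) * x k := by
  refine le_prod_mul_of_le_mul hpos (fun i hi => ?_) hn hnk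
  have hterm : ∀ l, p l i * (c i (σ l i))⁻¹ * x i ≤ p l i * x (σ l i) := fun l => by
    have hil : i ≤ σ l i := by have := hσ l i (by omega); omega
    have hci : 0 < c i (σ l i) := pos_of_mul_pos_left
      ((hpos i hi.le).trans_le (hc i _ hi.le hil)) (hpos _ (by omega)).le
    rw [mul_assoc]
    exact mul_le_mul_of_nonneg_left ((inv_mul_le_iff₀ hci).2 (hc i _ hi.le hil)) (hp l i)
  rw [sub_mul, one_mul, sum_mul]
  linarith [hx i (by omega), sum_le_sum fun l (_ : l ∈ univ) => hterm l]

lemma IsSolution.le_bA_mul (hx : IsSolution p σ x) (hpos : ∀ n, N ≤ n → 0 < x n) (r : ℕ)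
    {n k : ℕ} (hn : N ≤ n) (hnk : n ≤ k) : x n ≤ bA p σ r n k * x k := by
  induction r generalizing n k with
  | zero =>
    have h := hx.le_prod_mul hp hσ hpos (c := fun _ _ => 1)
      (fun n k hn hnk => by simpa using hx.monotoneOn hp hσ hpos hn (hn.trans hnk) hnk) hn hnk
    simpa [bA] using h
  | succ r ih => exact hx.le_prod_mul hp hσ hpos (fun n k hn hnk => ih hn hnk) hn hnk

lemma IsSolution.bA_pos (hx : IsSolution p σ x) (hpos : ∀ n, N ≤ n → 0 < x n) (r : ℕ)
    {n k : ℕ} (hn : N ≤ n) (hnk : n ≤ k) : 0 < bA p σ r n k :=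
  pos_of_mul_pos_left ((hpos n hn).trans_le (hx.le_bA_mul hp hσ hpos r hn hnk))
    (hpos k (hn.trans hnk)).le

end

lemma rho_le_apply {m : ℕ} [NeZero m] (σ : Fin m → ℕ → ℕ) (i : Fin m) {n j : ℕ} (hj : n ≤ j) :
    rho σ n ≤ σ i j :=
  (inf'_le _ (mem_univ i)).trans (Nat.sInf_le ⟨j, hj, rfl⟩)

lemma lt_rho {m : ℕ} [NeZero m] {σ : Fin m → ℕ → ℕ} (hσ : ∀ i n, 1 ≤ n → n + 1 ≤ σ i n)
    {n : ℕ} (hn : 1 ≤ n) : n < rho σ n := by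
  refine (lt_inf'_iff _).2 fun i _ => ?_
  have hne : (σ i '' Set.Ici n).Nonempty := ⟨σ i n, n, Set.self_mem_Ici, rfl⟩
  obtain ⟨s, hs, hs_eq⟩ := Nat.sInf_mem hne
  have := hσ i s (hn.trans hs)
  simp only [Set.mem_Ici] at hs
  rw [rhoi, ← hs_eq]
  omega

section

variable {m : ℕ} [NeZero m] {p : Fin m → ℕ → ℝ} {σ : Fin m → ℕ → ℕ} {x : ℕ → ℝ} {N : ℕ}
  (hp : ∀ i n, 0 ≤ p i n) (hσ : ∀ i n, 1 ≤ n → n + 1 ≤ σ i n)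
include hp hσ

lemma IsSolution.criterionSum_nonneg (hx : IsSolution p σ x) (hpos : ∀ n, N ≤ n → 0 < x n)
    (r : ℕ) {n : ℕ} (hn : N < n) : 0 ≤ criterionSum p σ r n :=
  sum_nonneg fun j hj => sum_nonneg fun i _ => mul_nonneg (hp i j) <| inv_nonneg.2 <|
    (hx.bA_pos hp hσ hpos r (hn.trans (lt_rho hσ (by omega))).le
      (rho_le_apply σ i (mem_Icc.1 hj).1)).le

/-- Summing the equation over `[n, ρ(n)]`: every advanced argument `σᵢ(j)` is at least `ρ(n)`,
where `x(σᵢ(j)) ≥ b_r(ρ(n), σᵢ(j))⁻¹ x(ρ(n))`. -/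
lemma IsSolution.criterionSum_mul_le (hx : IsSolution p σ x) (hpos : ∀ n, N ≤ n → 0 < x n)
    (r : ℕ) {n : ℕ} (hn : N < n) :
    criterionSum p σ r n * x (rho σ n) ≤ x (rho σ n) - x (n - 1) := by
  have hρ : n < rho σ n := lt_rho hσ (by omega)
  calc criterionSum p σ r n * x (rho σ n)
      = ∑ j ∈ Icc n (rho σ n), ∑ i : Fin m,
          p i j * ((bA p σ r (rho σ n) (σ i j))⁻¹ * x (rho σ n)) := by
        simp only [criterionSum, sum_mul, mul_assoc]
    _ ≤ ∑ j ∈ Icc n (rho σ n), ∑ i : Fin m, p i j * x (σ i j) := by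
        refine sum_le_sum fun j hj => sum_le_sum fun i _ => mul_le_mul_of_nonneg_left ?_ (hp i j)
        have hle := rho_le_apply σ i (mem_Icc.1 hj).1
        have hN : N ≤ rho σ n := by omega
        exact (inv_mul_le_iff₀ (hx.bA_pos hp hσ hpos r hN hle)).2
          (hx.le_bA_mul hp hσ hpos r hN hle)
    _ = x (rho σ n) - x (n - 1) := hx.sum_Icc (by omega) hρ.le

lemma IsSolution.criterionSum_lt_one (hx : IsSolution p σ x) (hpos : ∀ n, N ≤ n → 0 < x n)
    (r : ℕ) {n : ℕ} (hn : N < n) : criterionSum p σ r n < 1 := by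
  have hxρ : 0 < x (rho σ n) := hpos _ (hn.trans (lt_rho hσ (by omega))).le
  refine (mul_lt_iff_lt_one_left hxρ).1 ?_
  linarith [hx.criterionSum_mul_le hp hσ hpos r hn, hpos (n - 1) (by omega)]

lemma IsSolution.limsup_criterionSum_le_one (hx : IsSolution p σ x)
    (hpos : ∀ n, N ≤ n → 0 < x n) (r : ℕ) : limsup (criterionSum p σ r) atTop ≤ 1 :=
  limsup_le_of_le
    (isCoboundedUnder_le_of_eventually_le atTop
      (eventually_atTop.2 ⟨N + 1, fun _ hn => hx.criterionSum_nonneg hp hσ hpos r hn⟩))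
    (eventually_atTop.2 ⟨N + 1, fun _ hn => (hx.criterionSum_lt_one hp hσ hpos r hn).le⟩)

end

theorem stmt_6_general {m : ℕ} [NeZero m] (p : Fin m → ℕ → ℝ) (σ : Fin m → ℕ → ℕ)
    (hp : ∀ i : Fin m, ∀ n : ℕ, 0 ≤ p i n)
    (hσ : ∀ i : Fin m, ∀ n : ℕ, 1 ≤ n → n + 1 ≤ σ i n)
    (r : ℕ)
    (hcond : 1 < Filter.limsup (fun n : ℕ =>
        ∑ j ∈ Finset.Icc n (rho σ n), ∑ i : Fin m, p i j * (bA p σ r (rho σ n) (σ i j))⁻¹)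
      Filter.atTop)
    (x : ℕ → ℝ)
    (hxeq : ∀ n : ℕ, 1 ≤ n → x n - x (n - 1) - ∑ i : Fin m, p i n * x (σ i n) = 0) :
    (¬ ∃ N : ℕ, ∀ n ≥ N, 0 < x n) ∧ (¬ ∃ N : ℕ, ∀ n ≥ N, x n < 0) := by
  have not_eventually_pos : ∀ y, IsSolution p σ y → ¬ ∃ N : ℕ, ∀ n ≥ N, 0 < y n :=
    fun y hy ⟨_, hpos⟩ => hcond.not_ge (hy.limsup_criterionSum_le_one hp hσ hpos r)
  have hx : IsSolution p σ x := hxeq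
  exact ⟨not_eventually_pos x hx, fun ⟨N, hneg⟩ =>
    not_eventually_pos (-x) hx.neg ⟨N, fun n hn => neg_pos.2 (hneg n hn)⟩⟩

/-- Theorem 2.4′: if `∑_i p_i(n) < 1` for all `n` and for some `r ∈ ℕ`,
`limsup_{n→∞} ∑_{j=n}^{ρ(n)} ∑_{i=1}^m p_i(j) b_r(ρ(n), σ_i(j))⁻¹ > 1`,
then every solution of the advanced equation oscillates. -/
theorem stmt_6 {m : ℕ} [NeZero m] (p : Fin m → ℕ → ℝ) (σ : Fin m → ℕ → ℕ)
    (hp : ∀ i : Fin m, ∀ n : ℕ, 0 ≤ p i n)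
    (hσ : ∀ i : Fin m, ∀ n : ℕ, 1 ≤ n → n + 1 ≤ σ i n)
    (hsum : ∀ n : ℕ, ∑ i : Fin m, p i n < 1)
    (r : ℕ)
    (hcond : 1 < Filter.limsup (fun n : ℕ =>
        ∑ j ∈ Finset.Icc n (rho σ n), ∑ i : Fin m, p i j * (bA p σ r (rho σ n) (σ i j))⁻¹)
      Filter.atTop)
    (x : ℕ → ℝ)
    (hxeq : ∀ n : ℕ, 1 ≤ n → x n - x (n - 1) - ∑ i : Fin m, p i n * x (σ i n) = 0) :
    (¬ ∃ N : ℕ, ∀ n ≥ N, 0 < x n) ∧ (¬ ∃ N : ℕ, ∀ n ≥ N, x n < 0) :=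
  stmt_6_general p σ hp hσ r hcond x hxeq
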